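/- (Theorem 1, part 1: linear convergence of SUCAG.) Under the SUCAG setup, assume additionally μ ≥ 1, θ⁰ ≠ θ*, and the full delay assumption (A4): (m_k)_{k≥1} is nondecreasing with m_1 ≥ 1, 4 log m_k ≤ c₀ + log k for all k ≥ 1 (for some c₀ ≥ 0), and 2 m_k ≤ m₀ + (1/3 − β) k for all k ≥ 1 (for some m₀ > 0 and β ∈ (0, 1/3)). Fix Δ ∈ (0,1). Then there exists a threshold γ̄ > 0 (depending only on μ, L, L̄_H, c₀, β, m₀, Δ and ‖θ⁰ − θ*‖) such that for every step size γ with 0 < γ ≤ min{γ̄, 2/(μ+L)}, setting δ := 1 − Δγ·2μL/(μ+L) ∈ (0,1), the SUCAG iterates converge linearly: ‖θ^k − θ*‖² ≤ δ^k ‖θ⁰ − θ*‖² for all k ≥ 0. -/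

import Mathlib

/-!
Write `g k = ∇F (θ k) + e k`. The exact gradient step contracts,
`‖θ - θ* - γ ∇F θ‖² ≤ (1 - 2γμ + γ²L²) ‖θ - θ*‖²`, and for small `γ` this leaves a margin
`σγ` below `δ`. Since the Hessians are Lipschitz, the linearisation error is
`‖e k‖ ≤ 2 L̄_H maxᵢ ‖θ k - θ (τ k i)‖²`. Inductively `‖θ j - θ*‖ ≤ δ^{j/2} R₀` and every step
has length at most `2γLR₀`, so a delayed distance is bounded both by `2R₀ δ^{(k - m_k)/2}` and by
`2γLR₀ m_k`. Interpolating between the two bounds with exponents `3/2` and `1/2`, and controlling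
`m_k` by (A4), gives `‖e k‖ ≤ K γ^{3/8} δ^{k/2} R₀ ≤ (σ/3) δ^{k/2} R₀` for small `γ`, an error
that fits into the margin and closes the induction.
-/

open scoped BigOperators RealInnerProductSpace
open Real Finset

theorem norm_sub_sub_fderiv_le_of_lipschitz_fderiv {E F : Type*} [NormedAddCommGroup E]
    [NormedSpace ℝ E] [NormedAddCommGroup F] [NormedSpace ℝ F] {φ : E → F}
    (hφ : Differentiable ℝ φ) {c : ℝ} (hc : 0 ≤ c)
    (hφ' : ∀ x y, ‖fderiv ℝ φ x - fderiv ℝ φ y‖ ≤ c * ‖x - y‖) (x y : E) :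
    ‖φ y - φ x - fderiv ℝ φ x (y - x)‖ ≤ c * ‖y - x‖ ^ 2 := by
  rw [sq, ← mul_assoc]
  refine Convex.norm_image_sub_le_of_norm_fderiv_le' (fun z _ => hφ.differentiableAt)
    (fun z hz => (hφ' z x).trans ?_) (convex_segment x y) (left_mem_segment ℝ x y)
    (right_mem_segment ℝ x y)
  gcongr
  rw [← dist_eq_norm, ← dist_eq_norm, dist_comm z, dist_comm y]
  linarith [dist_add_dist_of_mem_segment hz, dist_nonneg (x := z) (y := y)]

theorem norm_sub_le_mul_of_norm_sub_succ_le {E : Type*} [SeminormedAddCommGroup E] {θ : ℕ → E}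
    {a b : ℕ} (hab : a ≤ b) {G : ℝ} (hG : ∀ j, a ≤ j → j < b → ‖θ (j + 1) - θ j‖ ≤ G) :
    ‖θ b - θ a‖ ≤ (b - a : ℕ) * G := by
  rw [← dist_eq_norm, dist_comm]
  simpa using dist_le_Ico_sum_of_dist_le hab (d := fun _ => G) fun hj1 hj2 => by
    rw [dist_comm, dist_eq_norm]; exact hG _ hj1 hj2

theorem norm_sub_inv_card_smul_sum_le {E ι : Type*} [SeminormedAddCommGroup E] [NormedSpace ℝ E]
    [Fintype ι] {r : ι → E} {M : ℝ} (hr : ∀ i, ‖r i‖ ≤ M) (j : ι) :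
    ‖r j - (Fintype.card ι : ℝ)⁻¹ • ∑ i, r i‖ ≤ 2 * M := by
  have hcard : (0 : ℝ) < Fintype.card ι := by exact_mod_cast Fintype.card_pos_iff.2 ⟨j⟩
  have havg : ‖(Fintype.card ι : ℝ)⁻¹ • ∑ i, r i‖ ≤ M := by
    rw [norm_smul, norm_inv, RCLike.norm_natCast, inv_mul_le_iff₀ hcard]
    simpa using norm_sum_le_of_le univ fun i _ => hr i
  linarith [norm_sub_le (r j) ((Fintype.card ι : ℝ)⁻¹ • ∑ i, r i), hr j]

section Gradient

variable {E : Type*} [NormedAddCommGroup E] [InnerProductSpace ℝ E] [CompleteSpace E]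

theorem gradient_const_mul_sum {ι : Type*} {s : Finset ι} {f : ι → E → ℝ} {x : E}
    (hf : ∀ i ∈ s, DifferentiableAt ℝ (f i) x) (c : ℝ) :
    gradient (fun y => c * ∑ i ∈ s, f i y) x = c • ∑ i ∈ s, gradient (f i) x := by
  simp only [gradient]
  rw [fderiv_const_mul (DifferentiableAt.fun_sum hf), fderiv_fun_sum hf, map_smul, map_sum]

theorem IsLocalMin.gradient_eq_zero {f : E → ℝ} {a : E} (h : IsLocalMin f a) :
    gradient f a = 0 := by
  rw [gradient, h.fderiv_eq_zero, map_zero]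

theorem ContDiff.differentiable_gradient {f : E → ℝ} (hf : ContDiff ℝ 2 f) :
    Differentiable ℝ (gradient f) :=
  (InnerProductSpace.toDual ℝ E).symm.toContinuousLinearEquiv.differentiable.comp
    ((hf.fderiv_right (m := 1) (by norm_num)).differentiable one_ne_zero)

theorem mul_sq_norm_sub_le_inner_gradient {F : E → ℝ} {μ : ℝ} {x₀ : E}
    (hF : ∀ x y, F x + ⟪gradient F x, y - x⟫ + μ / 2 * ‖y - x‖ ^ 2 ≤ F y)
    (hx₀ : gradient F x₀ = 0) (x : E) :
    μ * ‖x - x₀‖ ^ 2 ≤ ⟪gradient F x, x - x₀⟫ := by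
  have h₁ := hF x x₀
  have h₂ := hF x₀ x
  rw [hx₀, inner_zero_left] at h₂
  rw [← neg_sub x x₀, inner_neg_right, norm_neg] at h₁
  linarith

end Gradient

theorem norm_sub_smul_sq_le {E : Type*} [NormedAddCommGroup E] [InnerProductSpace ℝ E]
    {u v : E} {γ μ L : ℝ} (hγ : 0 ≤ γ) (hμ : μ * ‖u‖ ^ 2 ≤ ⟪v, u⟫) (hL : ‖v‖ ≤ L * ‖u‖) :
    ‖u - γ • v‖ ^ 2 ≤ (1 - 2 * γ * μ + γ ^ 2 * L ^ 2) * ‖u‖ ^ 2 := by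
  have hv : ‖v‖ ^ 2 ≤ (L * ‖u‖) ^ 2 := pow_le_pow_left₀ (norm_nonneg _) hL 2
  rw [norm_sub_sq_real, real_inner_smul_right, norm_smul, real_inner_comm, Real.norm_eq_abs,
    abs_of_nonneg hγ]
  nlinarith [mul_le_mul_of_nonneg_left hμ hγ, mul_le_mul_of_nonneg_left hv (sq_nonneg γ)]

theorem sq_add_le_of_sq_le {u w c δ X : ℝ} (hu : 0 ≤ u) (hw : 0 ≤ w) (hX : 0 ≤ X)
    (hc : 0 ≤ c) (hcδ : c ≤ δ) (hδ : δ ≤ 1) (hu' : u ^ 2 ≤ (δ - c) * X ^ 2)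
    (hw' : w ≤ c / 3 * X) : (u + w) ^ 2 ≤ δ * X ^ 2 := by
  have huX : u ≤ X := by
    refine (pow_le_pow_iff_left₀ hu hX two_ne_zero).1 (hu'.trans ?_)
    nlinarith [sq_nonneg X]
  nlinarith [mul_le_mul huX hw' hw hX, pow_le_pow_left₀ hw hw' 2,
    mul_nonneg (mul_nonneg hc (by linarith : (0:ℝ) ≤ 3 - c)) (sq_nonneg X)]

theorem sq_le_mul_rpow_mul_rpow {D a b c : ℝ} (hD : 0 ≤ D) (hc : 0 ≤ c) (ha : 0 ≤ a)
    (hb : 0 ≤ b) (hDa : D ≤ c * a) (hDb : D ≤ c * b) :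
    D ^ 2 ≤ c ^ 2 * (a ^ (3 / 2 : ℝ) * b ^ (1 / 2 : ℝ)) :=
  calc D ^ 2 = D ^ (3 / 2 : ℝ) * D ^ (1 / 2 : ℝ) := by
        rw [← rpow_add' hD (by norm_num)]; norm_num
    _ ≤ (c * a) ^ (3 / 2 : ℝ) * (c * b) ^ (1 / 2 : ℝ) := by gcongr
    _ = c ^ 2 * (a ^ (3 / 2 : ℝ) * b ^ (1 / 2 : ℝ)) := by
        rw [mul_rpow hc ha, mul_rpow hc hb, mul_mul_mul_comm, ← rpow_add' hc (by norm_num)]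
        norm_num

theorem rpow_half_sq {δ : ℝ} (hδ : 0 ≤ δ) (l : ℕ) : (δ ^ ((l : ℝ) / 2)) ^ 2 = δ ^ l := by
  rw [← rpow_natCast, ← rpow_mul hδ, ← rpow_natCast]
  norm_num

theorem norm_le_rpow_half_mul_of_sq_le {E : Type*} [SeminormedAddCommGroup E] {x : E} {δ R : ℝ}
    {l : ℕ} (hδ : 0 ≤ δ) (hR : 0 ≤ R) (h : ‖x‖ ^ 2 ≤ δ ^ l * R ^ 2) :
    ‖x‖ ≤ δ ^ ((l : ℝ) / 2) * R := by
  rw [← pow_le_pow_iff_left₀ (norm_nonneg x) (by positivity) two_ne_zero, mul_pow,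
    rpow_half_sq hδ]
  exact h

theorem norm_sub_le_two_mul_rpow_of_sq_le {E : Type*} [SeminormedAddCommGroup E] {θ : ℕ → E}
    {x₀ : E} {δ R m : ℝ} {j k : ℕ} (hδ : 0 < δ) (hδ₁ : δ ≤ 1) (hR : 0 ≤ R)
    (hdist : ∀ l ≤ k, ‖θ l - x₀‖ ^ 2 ≤ δ ^ l * R ^ 2) (hjk : j ≤ k) (hkj : (k : ℝ) - j ≤ m) :
    ‖θ k - θ j‖ ≤ 2 * R * δ ^ ((k - m) / 2) := by
  have hbound : ∀ l ≤ k, (k : ℝ) - m ≤ l → ‖θ l - x₀‖ ≤ δ ^ ((k - m) / 2) * R := fun l hl hml =>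
    (norm_le_rpow_half_mul_of_sq_le hδ.le hR (hdist l hl)).trans
      (mul_le_mul_of_nonneg_right (rpow_le_rpow_of_exponent_ge hδ hδ₁ (by linarith)) hR)
  calc ‖θ k - θ j‖ = ‖(θ k - x₀) - (θ j - x₀)‖ := by rw [sub_sub_sub_cancel_right]
    _ ≤ ‖θ k - x₀‖ + ‖θ j - x₀‖ := norm_sub_le _ _
    _ ≤ δ ^ ((k - m) / 2) * R + δ ^ ((k - m) / 2) * R :=
        add_le_add (hbound k le_rfl (by linarith [(Nat.cast_le.2 hjk : (j : ℝ) ≤ k)]))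
          (hbound j hjk (by linarith))
    _ = 2 * R * δ ^ ((k - m) / 2) := by ring

section PerturbedGradient

variable {E : Type*} [NormedAddCommGroup E] [InnerProductSpace ℝ E] {v : E → E} {x₀ : E}
  {γ δ σ L : ℝ}

theorem sq_norm_sub_smul_sub_le (hγ : 0 ≤ γ) (hσ : 0 ≤ σ) (hσδ : σ * γ ≤ δ) (hδ : δ ≤ 1)
    (hcontr : ∀ x, ‖x - x₀ - γ • v x‖ ^ 2 ≤ (δ - σ * γ) * ‖x - x₀‖ ^ 2) {x y : E} {X : ℝ}
    (hx : ‖x - x₀‖ ≤ X) (hy : ‖y - v x‖ ≤ σ / 3 * X) :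
    ‖x - γ • y - x₀‖ ^ 2 ≤ δ * X ^ 2 := by
  have hX : 0 ≤ X := (norm_nonneg _).trans hx
  have hsplit : x - γ • y - x₀ = (x - x₀ - γ • v x) - γ • (y - v x) := by
    rw [smul_sub]; abel
  have hw : ‖γ • (y - v x)‖ ≤ σ * γ / 3 * X := by
    rw [norm_smul, Real.norm_eq_abs, abs_of_nonneg hγ]
    nlinarith [mul_le_mul_of_nonneg_left hy hγ]
  have hu : ‖x - x₀ - γ • v x‖ ^ 2 ≤ (δ - σ * γ) * X ^ 2 :=
    (hcontr x).trans (by gcongr)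
  calc ‖x - γ • y - x₀‖ ^ 2 ≤ (‖x - x₀ - γ • v x‖ + ‖γ • (y - v x)‖) ^ 2 := by
        rw [hsplit]; gcongr; exact norm_sub_le _ _
    _ ≤ δ * X ^ 2 := sq_add_le_of_sq_le (norm_nonneg _) (norm_nonneg _) hX
        (mul_nonneg hσ hγ) hσδ hδ hu hw

theorem sq_norm_sub_le_pow_of_perturbed_gradient {θ g : ℕ → E} {R : ℝ}
    (hθ : ∀ k, θ (k + 1) = θ k - γ • g k) (hγ : 0 ≤ γ) (hσ : 0 ≤ σ) (hσL : σ ≤ L)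
    (hσδ : σ * γ ≤ δ) (hδ : δ ≤ 1) (hR : 0 ≤ R) (hv : ∀ x, ‖v x‖ ≤ L * ‖x - x₀‖)
    (hcontr : ∀ x, ‖x - x₀ - γ • v x‖ ^ 2 ≤ (δ - σ * γ) * ‖x - x₀‖ ^ 2)
    (herr : ∀ k, (∀ j ≤ k, ‖θ j - x₀‖ ^ 2 ≤ δ ^ j * R ^ 2) →
      (∀ j < k, ‖θ (j + 1) - θ j‖ ≤ 2 * γ * L * R) →
      ‖g k - v (θ k)‖ ≤ σ / 3 * (δ ^ ((k : ℝ) / 2) * R))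
    (h₀ : ‖θ 0 - x₀‖ ≤ R) (k : ℕ) :
    ‖θ k - x₀‖ ^ 2 ≤ δ ^ k * R ^ 2 := by
  have hδ₀ : 0 ≤ δ := (mul_nonneg hσ hγ).trans hσδ
  suffices ∀ k, (∀ j ≤ k, ‖θ j - x₀‖ ^ 2 ≤ δ ^ j * R ^ 2) ∧
      ∀ j < k, ‖θ (j + 1) - θ j‖ ≤ 2 * γ * L * R from (this k).1 k le_rfl
  intro k
  induction k with
  | zero =>
    refine ⟨fun j hj => ?_, fun j hj => absurd hj j.not_lt_zero⟩
    obtain rfl := Nat.le_zero.1 hj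
    simpa using pow_le_pow_left₀ (norm_nonneg _) h₀ 2
  | succ k ih =>
    obtain ⟨hdist, hstep⟩ := ih
    have he := herr k hdist hstep
    have hXR : δ ^ ((k : ℝ) / 2) * R ≤ R :=
      mul_le_of_le_one_left hR (rpow_le_one hδ₀ hδ (by positivity))
    have hk := norm_le_rpow_half_mul_of_sq_le hδ₀ hR (hdist k le_rfl)
    have hnext : ‖θ (k + 1) - x₀‖ ^ 2 ≤ δ ^ (k + 1) * R ^ 2 := by
      rw [hθ, pow_succ' δ k, mul_assoc, ← rpow_half_sq hδ₀, ← mul_pow]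
      exact sq_norm_sub_smul_sub_le hγ hσ hσδ hδ hcontr hk he
    have hstepk : ‖θ (k + 1) - θ k‖ ≤ 2 * γ * L * R := by
      rw [hθ, sub_sub_cancel_left, norm_neg, norm_smul, Real.norm_eq_abs, abs_of_nonneg hγ]
      have hg : ‖g k‖ ≤ 2 * L * R := calc
        ‖g k‖ ≤ ‖v (θ k)‖ + ‖g k - v (θ k)‖ := norm_le_insert' _ _
        _ ≤ L * R + σ / 3 * R := by
          gcongr
          · exact (hv _).trans (mul_le_mul_of_nonneg_left (hk.trans hXR) (hσ.trans hσL))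
          · exact he.trans (mul_le_mul_of_nonneg_left hXR (by positivity))
        _ ≤ 2 * L * R := by nlinarith
      nlinarith [mul_le_mul_of_nonneg_left hg hγ]
    refine ⟨fun j hj => ?_, fun j hj => ?_⟩
    · rcases Nat.le_succ_iff.1 hj with hj | rfl
      exacts [hdist j hj, hnext]
    · rcases Nat.lt_succ_iff_lt_or_eq.1 hj with hj | rfl
      exacts [hstep j hj, hstepk]

end PerturbedGradient

-- Assumption (A4) on the delay bounds `m k`.
structure DelayBound (m : ℕ → ℝ) (c₀ β m₀ : ℝ) : Prop where
  one_le : 1 ≤ m 1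
  monotone : ∀ j l : ℕ, 1 ≤ j → j ≤ l → m j ≤ m l
  log_le : ∀ k : ℕ, 1 ≤ k → 4 * log (m k) ≤ c₀ + log k
  le_linear : ∀ k : ℕ, 1 ≤ k → 2 * m k ≤ m₀ + (1 / 3 - β) * k

noncomputable def sucagDelayConst (L c₀ m₀ q b : ℝ) : ℝ :=
  √L * exp (c₀ / 8) * q ^ (-(3 * m₀ / 8)) * b ^ (-(1 / 8 : ℝ))

theorem rpow_mul_rpow_le_sucagDelayConst {δ γ L m q b c₀ β m₀ : ℝ} {k : ℕ} (hγ : 0 < γ)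
    (hL : 0 < L) (hm : 0 < m) (hq : 0 < q) (hb : 0 < b) (hk : 1 ≤ k) (hqδ : q ≤ δ)
    (hδb : δ ≤ 1 - b * γ) (hβ : 0 ≤ β) (hm₀ : 0 ≤ m₀) (hlog : 4 * log m ≤ c₀ + log k)
    (hlin : 2 * m ≤ m₀ + (1 / 3 - β) * k) :
    (δ ^ ((k - m) / 2)) ^ (3 / 2 : ℝ) * (γ * L * m) ^ (1 / 2 : ℝ) ≤
      sucagDelayConst L c₀ m₀ q b * γ ^ (3 / 8 : ℝ) * δ ^ ((k : ℝ) / 2) := by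
  have hδ : 0 < δ := hq.trans_le hqδ
  have hk₀ : (0 : ℝ) < k := by exact_mod_cast hk
  -- in logarithmic coordinates the estimate is linear, up to the products with `log δ`
  have key : δ ^ ((k - m) / 2 * (3 / 2)) * γ ^ (1 / 2 : ℝ) * m ^ (1 / 2 : ℝ) ≤
      exp (c₀ / 8) * q ^ (-(3 * m₀ / 8)) * b ^ (-(1 / 8 : ℝ)) * γ ^ (3 / 8 : ℝ) *
        δ ^ ((k : ℝ) / 2) := by
    simp only [rpow_def_of_pos hδ, rpow_def_of_pos hγ, rpow_def_of_pos hm, rpow_def_of_pos hq,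
      rpow_def_of_pos hb, ← exp_add, exp_le_exp]
    have hδ₁ : log δ ≤ -(b * γ) := by linarith [log_le_sub_one_of_pos hδ]
    have hqδ' : log q ≤ log δ := log_le_log hq hqδ
    have hkbγ : log k + log b + log γ ≤ k * (b * γ) - 1 := by
      rw [← log_mul hk₀.ne' hb.ne', ← log_mul (by positivity) hγ.ne']
      exact (log_le_sub_one_of_pos (by positivity)).trans_eq (by ring)
    nlinarith [mul_nonneg (by nlinarith : 0 ≤ 3 * m₀ + k - 6 * m) (by linarith [mul_pos hb hγ] :
      0 ≤ -log δ), mul_le_mul_of_nonneg_left hqδ' hm₀, mul_le_mul_of_nonneg_left hδ₁ hk₀.le]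
  rw [← rpow_mul hδ.le, mul_rpow (by positivity) hm.le, mul_rpow hγ.le hL.le, ← sqrt_eq_rpow L]
  calc _ = √L * (δ ^ ((k - m) / 2 * (3 / 2)) * γ ^ (1 / 2 : ℝ) * m ^ (1 / 2 : ℝ)) := by ring
    _ ≤ √L * (exp (c₀ / 8) * q ^ (-(3 * m₀ / 8)) * b ^ (-(1 / 8 : ℝ)) * γ ^ (3 / 8 : ℝ) *
        δ ^ ((k : ℝ) / 2)) := by gcongr
    _ = _ := by rw [sucagDelayConst]; ring

section Sucag

variable {E : Type*} [NormedAddCommGroup E] [InnerProductSpace ℝ E] [CompleteSpace E]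
  {N : ℕ} {f : Fin N → E → ℝ} {LbarH : ℝ} {idx : ℕ → Fin N} {τ : ℕ → Fin N → ℕ} {θ : ℕ → E}
  {gA : Fin N → ℕ → E → E} {g : ℕ → E}

theorem norm_sucag_error_le (hf : ∀ i, ContDiff ℝ 2 (f i)) (hLbarH : 0 ≤ LbarH)
    (hHess : ∀ i x y, ‖fderiv ℝ (gradient (f i)) x - fderiv ℝ (gradient (f i)) y‖
      ≤ LbarH * ‖x - y‖)
    (hgA : ∀ i k x, gA i k x = gradient (f i) (θ (τ k i))
      + (fderiv ℝ (gradient (f i)) (θ (τ k i))) (x - θ (τ k i)))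
    (hg : ∀ k, g k = (gradient (f (idx k)) (θ k) - gA (idx k) k (θ k))
      + (N : ℝ)⁻¹ • ∑ i, gA i k (θ k))
    {k : ℕ} {D : ℝ} (hD : ∀ i, ‖θ k - θ (τ k i)‖ ≤ D) :
    ‖g k - gradient (fun x => (N : ℝ)⁻¹ * ∑ i, f i x) (θ k)‖ ≤ 2 * (LbarH * D ^ 2) := by
  have hr : ∀ i, ‖gradient (f i) (θ k) - gA i k (θ k)‖ ≤ LbarH * D ^ 2 := fun i => by
    rw [hgA, ← sub_sub]
    refine (norm_sub_sub_fderiv_le_of_lipschitz_fderiv (hf i).differentiable_gradient hLbarH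
      (hHess i) _ _).trans ?_
    gcongr
    exact hD i
  have herr : g k - gradient (fun x => (N : ℝ)⁻¹ * ∑ i, f i x) (θ k) =
      (gradient (f (idx k)) (θ k) - gA (idx k) k (θ k))
        - (Fintype.card (Fin N) : ℝ)⁻¹ • ∑ i, (gradient (f i) (θ k) - gA i k (θ k)) := by
    have hdiff : ∀ i ∈ univ, DifferentiableAt ℝ (f i) (θ k) := fun i _ =>
      ((hf i).differentiable two_ne_zero).differentiableAt
    rw [hg, gradient_const_mul_sum hdiff, Fintype.card_fin, sum_sub_distrib, smul_sub]
    abel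
  rw [herr]
  exact norm_sub_inv_card_smul_sum_le hr (idx k)

theorem norm_sucag_error_le_of_delay {m : ℕ → ℝ} {c₀ β m₀ γ L R q b δ : ℝ} {x₀ : E}
    (hf : ∀ i, ContDiff ℝ 2 (f i)) (hLbarH : 0 ≤ LbarH)
    (hHess : ∀ i x y, ‖fderiv ℝ (gradient (f i)) x - fderiv ℝ (gradient (f i)) y‖
      ≤ LbarH * ‖x - y‖)
    (hgA : ∀ i k x, gA i k x = gradient (f i) (θ (τ k i))
      + (fderiv ℝ (gradient (f i)) (θ (τ k i))) (x - θ (τ k i)))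
    (hg : ∀ k, g k = (gradient (f (idx k)) (θ k) - gA (idx k) k (θ k))
      + (N : ℝ)⁻¹ • ∑ i, gA i k (θ k))
    (hτ : ∀ k i, τ k i ≤ k - 1) (hτm : ∀ k : ℕ, 1 ≤ k → ∀ i, (k : ℝ) - τ k i ≤ m k)
    (hm : DelayBound m c₀ β m₀) (hβ : 0 ≤ β) (hm₀ : 0 ≤ m₀) (hγ : 0 < γ) (hL : 0 < L)
    (hR : 0 ≤ R) (hq : 0 < q) (hb : 0 < b) (hqδ : q ≤ δ) (hδb : δ ≤ 1 - b * γ) {k : ℕ}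
    (hdist : ∀ j ≤ k, ‖θ j - x₀‖ ^ 2 ≤ δ ^ j * R ^ 2)
    (hstep : ∀ j < k, ‖θ (j + 1) - θ j‖ ≤ 2 * γ * L * R) :
    ‖g k - gradient (fun x => (N : ℝ)⁻¹ * ∑ i, f i x) (θ k)‖ ≤
      8 * LbarH * R * sucagDelayConst L c₀ m₀ q b * γ ^ (3 / 8 : ℝ) *
        (δ ^ ((k : ℝ) / 2) * R) := by
  have hδ : 0 < δ := hq.trans_le hqδ
  have hC : 0 ≤ sucagDelayConst L c₀ m₀ q b := by unfold sucagDelayConst; positivity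
  rcases Nat.eq_zero_or_pos k with rfl | hk
  · have hτ₀ : ∀ i, τ 0 i = 0 := fun i => Nat.le_zero.1 (hτ 0 i)
    refine (norm_sucag_error_le hf hLbarH hHess hgA hg (D := 0) fun i => by simp [hτ₀]).trans ?_
    rw [zero_pow two_ne_zero, mul_zero, mul_zero]
    positivity
  have hδ₁ : δ ≤ 1 := by nlinarith
  have hτk : ∀ i, τ k i ≤ k := fun i => (hτ k i).trans (Nat.sub_le k 1)
  have hDa : ∀ i, ‖θ k - θ (τ k i)‖ ≤ 2 * R * δ ^ ((k - m k) / 2) := fun i =>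
    norm_sub_le_two_mul_rpow_of_sq_le hδ hδ₁ hR hdist (hτk i) (hτm k hk i)
  have hDb : ∀ i, ‖θ k - θ (τ k i)‖ ≤ 2 * R * (γ * L * m k) := fun i => by
    refine (norm_sub_le_mul_of_norm_sub_succ_le (hτk i) fun j _ hj => hstep j hj).trans ?_
    rw [Nat.cast_sub (hτk i)]
    nlinarith [hτm k hk i, mul_nonneg (mul_nonneg hγ.le hL.le) hR]
  have hmk : 0 < m k := one_pos.trans_le (hm.one_le.trans (hm.monotone 1 k le_rfl hk))
  refine (norm_sucag_error_le hf hLbarH hHess hgA hg fun i => le_min (hDa i) (hDb i)).trans ?_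
  calc 2 * (LbarH * min (2 * R * δ ^ ((k - m k) / 2)) (2 * R * (γ * L * m k)) ^ 2)
      ≤ 2 * (LbarH * ((2 * R) ^ 2 *
        ((δ ^ ((k - m k) / 2)) ^ (3 / 2 : ℝ) * (γ * L * m k) ^ (1 / 2 : ℝ)))) := by
        gcongr
        exact sq_le_mul_rpow_mul_rpow (le_min (by positivity) (by positivity)) (by positivity)
          (by positivity) (by positivity) (min_le_left _ _) (min_le_right _ _)
    _ ≤ 2 * (LbarH * ((2 * R) ^ 2 *
        (sucagDelayConst L c₀ m₀ q b * γ ^ (3 / 8 : ℝ) * δ ^ ((k : ℝ) / 2)))) := by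
        gcongr 2 * (LbarH * (_ * ?_))
        exact rpow_mul_rpow_le_sucagDelayConst hγ hL hmk hq hb hk hqδ hδb hβ hm₀
          (hm.log_le k hk) (hm.le_linear k hk)
    _ = _ := by ring

end Sucag

theorem exists_stepSize_threshold {σ L K : ℝ} (hσ : 0 < σ) (hL : 0 < L) (hK : 0 < K) :
    ∃ γbar > 0, ∀ γ, 0 ≤ γ → γ ≤ γbar → γ * L ^ 2 ≤ σ ∧ K * γ ^ (3 / 8 : ℝ) ≤ σ / 3 := by
  refine ⟨min (σ / L ^ 2) ((σ / (3 * K)) ^ (8 / 3 : ℝ)), by positivity,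
    fun γ hγ hγbar => ⟨?_, ?_⟩⟩
  · exact (le_div_iff₀ (by positivity)).1 (hγbar.trans (min_le_left _ _))
  · calc K * γ ^ (3 / 8 : ℝ) ≤ K * ((σ / (3 * K)) ^ (8 / 3 : ℝ)) ^ (3 / 8 : ℝ) := by
          gcongr; exact hγbar.trans (min_le_right _ _)
      _ = σ / 3 := by
          rw [← rpow_mul (by positivity)]; norm_num; field_simp

theorem two_mul_mul_div_add_le {μ L : ℝ} (hμ : 0 < μ) (hL : 0 < L) :
    2 * μ * L / (μ + L) ≤ 2 * μ ∧ 2 * μ * L / (μ + L) ≤ 2 * L ∧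
      2 * μ * L / (μ + L) ≤ (μ + L) / 2 := by
  have hμL : 0 < μ + L := by positivity
  refine ⟨?_, ?_, ?_⟩ <;> rw [div_le_iff₀ hμL] <;> nlinarith [sq_nonneg (μ - L)]

theorem sucag_linear_convergence_general
    (μ L LbarH c₀ β m₀ Δ R₀ : ℝ)
    (hμ : 1 ≤ μ) (hL : 0 < L) (hLbarH : 0 < LbarH)
    (hβ0 : 0 < β) (hm₀ : 0 < m₀)
    (hΔ0 : 0 < Δ) (hΔ1 : Δ < 1) (hR₀ : 0 < R₀) :
    ∃ γbar : ℝ, 0 < γbar ∧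
      ∀ (d N : ℕ), 1 ≤ d → 1 ≤ N →
      ∀ (f : Fin N → EuclideanSpace ℝ (Fin d) → ℝ),
      (∀ i, ConvexOn ℝ Set.univ (f i)) →
      (∀ i, ContDiff ℝ 2 (f i)) →
      ∀ (LH : Fin N → ℝ), (∀ i, 0 < LH i) →
      (∀ i x y, ‖fderiv ℝ (gradient (f i)) x - fderiv ℝ (gradient (f i)) y‖
        ≤ LH i * ‖x - y‖) →
      IsGreatest (Set.range LH) LbarH →
      ∀ (F : EuclideanSpace ℝ (Fin d) → ℝ),
      F = (fun x => (N : ℝ)⁻¹ * ∑ i, f i x) →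
      (∀ x y, ‖gradient F x - gradient F y‖ ≤ L * ‖x - y‖) →
      (∀ x y : EuclideanSpace ℝ (Fin d),
        F x + ⟪gradient F x, y - x⟫ + μ / 2 * ‖y - x‖ ^ 2 ≤ F y) →
      ∀ (θstar : EuclideanSpace ℝ (Fin d)), (∀ x, F θstar ≤ F x) →
      -- the delay assumption (A4)
      ∀ (m : ℕ → ℝ), 1 ≤ m 1 →
      (∀ j l : ℕ, 1 ≤ j → j ≤ l → m j ≤ m l) →
      (∀ k : ℕ, 1 ≤ k → 4 * Real.log (m k) ≤ c₀ + Real.log k) →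
      (∀ k : ℕ, 1 ≤ k → 2 * m k ≤ m₀ + (1 / 3 - β) * k) →
      -- the step size
      ∀ (γ : ℝ), 0 < γ → γ ≤ γbar → γ ≤ 2 / (μ + L) →
      -- the SUCAG iterates
      ∀ (idx : ℕ → Fin N) (τ : ℕ → Fin N → ℕ),
      (∀ (k : ℕ) (i : Fin N), τ k i ≤ k - 1) →
      (∀ k : ℕ, 1 ≤ k → ∀ i, (k : ℝ) - (τ k i : ℝ) ≤ m k) →
      ∀ (θ : ℕ → EuclideanSpace ℝ (Fin d))
        (gA : Fin N → ℕ → EuclideanSpace ℝ (Fin d) → EuclideanSpace ℝ (Fin d)),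
      (∀ i k x, gA i k x = gradient (f i) (θ (τ k i))
        + (fderiv ℝ (gradient (f i)) (θ (τ k i))) (x - θ (τ k i))) →
      ∀ (g : ℕ → EuclideanSpace ℝ (Fin d)),
      (∀ k, g k = (gradient (f (idx k)) (θ k) - gA (idx k) k (θ k))
        + (N : ℝ)⁻¹ • ∑ i, gA i k (θ k)) →
      (∀ k, θ (k + 1) = θ k - γ • g k) →
      -- the initialization
      ‖θ 0 - θstar‖ = R₀ →
      -- conclusion: with δ := 1 − Δγ·2μL/(μ+L) ∈ (0,1), linear convergence
      (0 < 1 - Δ * γ * (2 * μ * L / (μ + L))) ∧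
      (1 - Δ * γ * (2 * μ * L / (μ + L)) < 1) ∧
      ∀ k : ℕ, ‖θ k - θstar‖ ^ 2
        ≤ (1 - Δ * γ * (2 * μ * L / (μ + L))) ^ k * ‖θ 0 - θstar‖ ^ 2 := by
  have hμ₀ : 0 < μ := one_pos.trans_le hμ
  obtain ⟨hκμ, hκL, hκ⟩ := two_mul_mul_div_add_le hμ₀ hL
  set κ := 2 * μ * L / (μ + L)
  have hκ₀ : 0 < κ := by positivity
  have hq : 0 < 1 - Δ := sub_pos.2 hΔ1
  have hC : 0 < sucagDelayConst L c₀ m₀ (1 - Δ) (Δ * κ) := by unfold sucagDelayConst; positivity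
  obtain ⟨γbar, hγbar, hsmall⟩ := exists_stepSize_threshold (σ := (1 - Δ) * κ / 2)
    (K := 8 * LbarH * R₀ * sucagDelayConst L c₀ m₀ (1 - Δ) (Δ * κ)) (by positivity) hL
    (by positivity)
  refine ⟨γbar, hγbar, fun d N _ _ f _ hf LH _ hLH hLbar F hF hFlip hsc θstar hmin m hm1 hmmono
    hmlog hmlin γ hγ hγbar' hγ2 idx τ hτ hτm θ gA hgA g hg hθ hθ0 => ?_⟩
  obtain ⟨hγL, hγK⟩ := hsmall γ hγ.le hγbar'
  have hγκ : γ * κ ≤ 1 := by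
    have := (le_div_iff₀ (by positivity : 0 < μ + L)).1 hγ2; nlinarith
  have hΔγκ : 0 < Δ * γ * κ := by positivity
  have hqδ : 1 - Δ ≤ 1 - Δ * γ * κ := by nlinarith
  have hgrad₀ : gradient F θstar = 0 :=
    IsLocalMin.gradient_eq_zero (Filter.Eventually.of_forall hmin)
  have hv : ∀ x, ‖gradient F x‖ ≤ L * ‖x - θstar‖ := fun x => by
    simpa [hgrad₀] using hFlip x θstar
  have hHess : ∀ i x y, ‖fderiv ℝ (gradient (f i)) x - fderiv ℝ (gradient (f i)) y‖
      ≤ LbarH * ‖x - y‖ := fun i x y =>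
    (hLH i x y).trans (by gcongr; exact hLbar.2 ⟨i, rfl⟩)
  refine ⟨by linarith, by linarith, fun k => ?_⟩
  rw [hθ0]
  refine sq_norm_sub_le_pow_of_perturbed_gradient hθ hγ.le (σ := (1 - Δ) * κ / 2)
    (by positivity) (by nlinarith) (by nlinarith) (by linarith) hR₀.le hv
    (fun x => (norm_sub_smul_sq_le hγ.le (mul_sq_norm_sub_le_inner_gradient hsc hgrad₀ x)
      (hv x)).trans (by gcongr; nlinarith)) (fun k hdist hstep => ?_) hθ0.le k
  subst hF
  refine (norm_sucag_error_le_of_delay (q := 1 - Δ) (b := Δ * κ) hf hLbarH.le hHess hgA hg hτ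
    hτm ⟨hm1, hmmono, hmlog, hmlin⟩ hβ0.le hm₀.le hγ hL hR₀.le hq (by positivity) hqδ
    (by linarith) hdist hstep).trans ?_
  exact mul_le_mul_of_nonneg_right hγK (mul_nonneg (rpow_nonneg (by linarith) _) hR₀.le)

/-- Theorem 1, part 1: linear convergence of SUCAG. The threshold
`γ̄` depends only on `μ, L, L̄_H, c₀, β, m₀, Δ` and `R₀ = ‖θ⁰ − θ*‖`, since it is
quantified before all other data. -/
theorem sucag_linear_convergence
    (μ L LbarH c₀ β m₀ Δ R₀ : ℝ)
    (hμ : 1 ≤ μ) (hL : 0 < L) (hLbarH : 0 < LbarH)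
    (hc₀ : 0 ≤ c₀) (hβ0 : 0 < β) (hβ : β < 1 / 3) (hm₀ : 0 < m₀)
    (hΔ0 : 0 < Δ) (hΔ1 : Δ < 1) (hR₀ : 0 < R₀) :
    ∃ γbar : ℝ, 0 < γbar ∧
      ∀ (d N : ℕ), 1 ≤ d → 1 ≤ N →
      ∀ (f : Fin N → EuclideanSpace ℝ (Fin d) → ℝ),
      (∀ i, ConvexOn ℝ Set.univ (f i)) →
      (∀ i, ContDiff ℝ 2 (f i)) →
      ∀ (LH : Fin N → ℝ), (∀ i, 0 < LH i) →
      (∀ i x y, ‖fderiv ℝ (gradient (f i)) x - fderiv ℝ (gradient (f i)) y‖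
        ≤ LH i * ‖x - y‖) →
      IsGreatest (Set.range LH) LbarH →
      ∀ (F : EuclideanSpace ℝ (Fin d) → ℝ),
      F = (fun x => (N : ℝ)⁻¹ * ∑ i, f i x) →
      (∀ x y, ‖gradient F x - gradient F y‖ ≤ L * ‖x - y‖) →
      (∀ x y : EuclideanSpace ℝ (Fin d),
        F x + ⟪gradient F x, y - x⟫ + μ / 2 * ‖y - x‖ ^ 2 ≤ F y) →
      ∀ (θstar : EuclideanSpace ℝ (Fin d)), (∀ x, F θstar ≤ F x) →
      -- the delay assumption (A4)
      ∀ (m : ℕ → ℝ), 1 ≤ m 1 →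
      (∀ j l : ℕ, 1 ≤ j → j ≤ l → m j ≤ m l) →
      (∀ k : ℕ, 1 ≤ k → 4 * Real.log (m k) ≤ c₀ + Real.log k) →
      (∀ k : ℕ, 1 ≤ k → 2 * m k ≤ m₀ + (1 / 3 - β) * k) →
      -- the step size
      ∀ (γ : ℝ), 0 < γ → γ ≤ γbar → γ ≤ 2 / (μ + L) →
      -- the SUCAG iterates
      ∀ (idx : ℕ → Fin N) (τ : ℕ → Fin N → ℕ),
      (∀ (k : ℕ) (i : Fin N), τ k i ≤ k - 1) →
      (∀ k : ℕ, 1 ≤ k → ∀ i, (k : ℝ) - (τ k i : ℝ) ≤ m k) →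
      ∀ (θ : ℕ → EuclideanSpace ℝ (Fin d))
        (gA : Fin N → ℕ → EuclideanSpace ℝ (Fin d) → EuclideanSpace ℝ (Fin d)),
      (∀ i k x, gA i k x = gradient (f i) (θ (τ k i))
        + (fderiv ℝ (gradient (f i)) (θ (τ k i))) (x - θ (τ k i))) →
      ∀ (g : ℕ → EuclideanSpace ℝ (Fin d)),
      (∀ k, g k = (gradient (f (idx k)) (θ k) - gA (idx k) k (θ k))
        + (N : ℝ)⁻¹ • ∑ i, gA i k (θ k)) →
      (∀ k, θ (k + 1) = θ k - γ • g k) →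
      -- the initialization
      ‖θ 0 - θstar‖ = R₀ →
      -- conclusion: with δ := 1 − Δγ·2μL/(μ+L) ∈ (0,1), linear convergence
      (0 < 1 - Δ * γ * (2 * μ * L / (μ + L))) ∧
      (1 - Δ * γ * (2 * μ * L / (μ + L)) < 1) ∧
      ∀ k : ℕ, ‖θ k - θstar‖ ^ 2
        ≤ (1 - Δ * γ * (2 * μ * L / (μ + L))) ^ k * ‖θ 0 - θstar‖ ^ 2 :=
  sucag_linear_convergence_general μ L LbarH c₀ β m₀ Δ R₀ hμ hL hLbarH hβ0 hm₀ hΔ0 hΔ1 hR₀
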